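/- If f ∈ M = φK_θ ⊕ ψK_θ is written as f = φk₁ + ψk₂ with k₁, k₂ ∈ K_θ, then C_M f = ψ C_θ k₁ + φ C_θ k₂, where C_M f = θφψ z̄ f̄ and C_θ k = θ z̄ k̄. In particular C_M f ∈ M. -/

import Mathlib

open MeasureTheory Complex Submodule

noncomputable section

namespace DualBand

/-- Haar (normalized Lebesgue) measure on the unit circle, realized additively. -/
abbrev μ : Measure UnitAddCircle := AddCircle.haarAddCircle

/-- The Lebesgue space L² of the unit circle. -/
abbrev L2 : Type := Lp ℂ 2 μ

lemma mul_memLp (φ : UnitAddCircle →ₘ[μ] ℂ) (hφ : ∀ᵐ x ∂μ, ‖φ x‖ = 1) (f : L2) :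
    MemLp (fun x => φ x * f x) 2 μ := by
  refine ⟨φ.aestronglyMeasurable.mul (Lp.aestronglyMeasurable f), ?_⟩
  have h : eLpNorm (fun x => φ x * f x) 2 μ = eLpNorm f 2 μ := by
    refine eLpNorm_congr_norm_ae ?_
    filter_upwards [hφ] with x hx
    simp [norm_mul, hx]
  rw [h]
  exact Lp.eLpNorm_lt_top f

/-- Multiplication by an a.e. unimodular measurable function, as a linear map on L². -/
def mulOp (φ : UnitAddCircle →ₘ[μ] ℂ) (hφ : ∀ᵐ x ∂μ, ‖φ x‖ = 1) : L2 →ₗ[ℂ] L2 where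
  toFun f := (mul_memLp φ hφ f).toLp _
  map_add' f g := by
    refine Lp.ext ?_
    filter_upwards [MemLp.coeFn_toLp (mul_memLp φ hφ (f + g)),
      MemLp.coeFn_toLp (mul_memLp φ hφ f), MemLp.coeFn_toLp (mul_memLp φ hφ g),
      Lp.coeFn_add f g,
      Lp.coeFn_add ((mul_memLp φ hφ f).toLp _) ((mul_memLp φ hφ g).toLp _)]
      with x h1 h2 h3 h4 h5
    rw [h1, h5, Pi.add_apply, h2, h3, h4, Pi.add_apply]
    ring
  map_smul' c f := by
    refine Lp.ext ?_
    filter_upwards [MemLp.coeFn_toLp (mul_memLp φ hφ (c • f)),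
      MemLp.coeFn_toLp (mul_memLp φ hφ f),
      Lp.coeFn_smul c f,
      Lp.coeFn_smul c ((mul_memLp φ hφ f).toLp _)]
      with x h1 h2 h3 h4
    rw [h1, RingHom.id_apply, h4, Pi.smul_apply, h2, h3, Pi.smul_apply]
    simp [smul_eq_mul]
    ring

/-- Complex conjugation of an a.e.-defined function. -/
def conjAE (φ : UnitAddCircle →ₘ[μ] ℂ) : UnitAddCircle →ₘ[μ] ℂ :=
  AEEqFun.comp (starRingEnd ℂ) RCLike.continuous_conj φ

lemma conj_memLp (f : L2) : MemLp (fun x => (starRingEnd ℂ) (f x)) 2 μ := by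
  refine ⟨RCLike.continuous_conj.comp_aestronglyMeasurable (Lp.aestronglyMeasurable f), ?_⟩
  have h : eLpNorm (fun x => (starRingEnd ℂ) (f x)) 2 μ = eLpNorm f 2 μ :=
    eLpNorm_congr_norm_ae (Filter.Eventually.of_forall fun x => by simp)
  rw [h]
  exact Lp.eLpNorm_lt_top f

/-- Pointwise complex conjugation on L². -/
def conjL2 (f : L2) : L2 := (conj_memLp f).toLp _

/-- The conjugate z̄ of the coordinate function, as an a.e.-defined function. -/
def zbar : UnitAddCircle →ₘ[μ] ℂ :=
  AEEqFun.mk (⇑(fourier (T := 1) (-1)))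
    ((fourier (T := 1) (-1)).continuous.aestronglyMeasurable)

/-- The Hardy space H² inside L², as the closed span of the nonnegative Fourier modes. -/
def H2 : Submodule ℂ L2 :=
  (Submodule.span ℂ (Set.range fun n : ℕ => (fourierLp 2 (n : ℤ) : L2))).topologicalClosure

/-- The model space K_θ = H² ⊖ θH². -/
def modelSpace (θ : UnitAddCircle →ₘ[μ] ℂ) (hθ : ∀ᵐ x ∂μ, ‖θ x‖ = 1) : Submodule ℂ L2 :=
  H2 ⊓ (H2.map (mulOp θ hθ))ᗮ

lemma modelSpace_isClosed (θ : UnitAddCircle →ₘ[μ] ℂ) (hθ : ∀ᵐ x ∂μ, ‖θ x‖ = 1) :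
    IsClosed ((modelSpace θ hθ : Set L2)) := by
  have h1 : (modelSpace θ hθ : Set L2)
      = (H2 : Set L2) ∩ ((H2.map (mulOp θ hθ))ᗮ : Set L2) := rfl
  rw [h1]
  exact (Submodule.isClosed_topologicalClosure _).inter
    (Submodule.isClosed_orthogonal (H2.map (mulOp θ hθ)))

instance (θ : UnitAddCircle →ₘ[μ] ℂ) (hθ : ∀ᵐ x ∂μ, ‖θ x‖ = 1) :
    CompleteSpace (modelSpace θ hθ) :=
  (modelSpace_isClosed θ hθ).completeSpace_coe


/-!
Since `|φ| = |ψ| = 1`, pointwise `θφψz̄ · conj (φk₁ + ψk₂) = ψ · θz̄k̄₁ + φ · θz̄k̄₂`, so everything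
rests on `C_θ K_θ ⊆ K_θ`. The pairing `⟪u f̄, g⟫ = ∫ ū f g` is symmetric in `f` and `g`, which moves
`C_θ` across the inner product onto Fourier modes, where `C_θ e_n = θ e_{-n-1}` and
`C_θ (θ e_n) = e_{-n-1}`. Hence the coefficients of `C_θ k` at negative modes are inner products of
`k` with `θH²`, and `C_θ k ⊥ θe_m` reduces to `k ⊥ e_{-m-1}`.
-/

open scoped InnerProductSpace ComplexConjugate

lemma mul_conj_of_norm_eq_one {z : ℂ} (h : ‖z‖ = 1) : z * conj z = 1 := by
  rw [RCLike.mul_conj, h]; norm_num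

section MulOp

variable (φ : UnitAddCircle →ₘ[μ] ℂ) (hφ : ∀ᵐ x ∂μ, ‖φ x‖ = 1)

lemma coeFn_mulOp (f : L2) : mulOp φ hφ f =ᵐ[μ] fun x => φ x * f x :=
  (mul_memLp φ hφ f).coeFn_toLp

lemma coeFn_conjL2 (f : L2) : conjL2 f =ᵐ[μ] fun x => conj (f x) :=
  (conj_memLp f).coeFn_toLp

lemma coeFn_mulOp_conjL2 (f : L2) : mulOp φ hφ (conjL2 f) =ᵐ[μ] fun x => φ x * conj (f x) := by
  filter_upwards [coeFn_mulOp φ hφ (conjL2 f), coeFn_conjL2 f] with x h₁ h₂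
  rw [h₁, h₂]

lemma norm_mulOp (f : L2) : ‖mulOp φ hφ f‖ = ‖f‖ := by
  rw [Lp.norm_def, Lp.norm_def, eLpNorm_congr_ae (coeFn_mulOp φ hφ f)]
  congr 1
  refine eLpNorm_congr_norm_ae ?_
  filter_upwards [hφ] with x hx
  simp [hx]

def mulCLM : L2 →L[ℂ] L2 :=
  (mulOp φ hφ).mkContinuous 1 fun f => by rw [norm_mulOp, one_mul]

lemma inner_mulOp_conjL2_comm (f g : L2) :
    ⟪mulOp φ hφ (conjL2 f), g⟫_ℂ = ⟪mulOp φ hφ (conjL2 g), f⟫_ℂ := by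
  rw [L2.inner_def, L2.inner_def]
  refine integral_congr_ae ?_
  filter_upwards [coeFn_mulOp_conjL2 φ hφ f, coeFn_mulOp_conjL2 φ hφ g] with x hf hg
  simp only [hf, hg, RCLike.inner_apply, map_mul, Complex.conj_conj]
  ring

end MulOp

lemma mulOp_conjL2_add (θ φ ψ η : UnitAddCircle →ₘ[μ] ℂ)
    (hφ : ∀ᵐ x ∂μ, ‖φ x‖ = 1) (hψ : ∀ᵐ x ∂μ, ‖ψ x‖ = 1)
    (hθφψη : ∀ᵐ x ∂μ, ‖(θ * φ * ψ * η) x‖ = 1) (hθη : ∀ᵐ x ∂μ, ‖(θ * η) x‖ = 1) (k₁ k₂ : L2) :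
    mulOp (θ * φ * ψ * η) hθφψη (conjL2 (mulOp φ hφ k₁ + mulOp ψ hψ k₂))
      = mulOp ψ hψ (mulOp (θ * η) hθη (conjL2 k₁))
        + mulOp φ hφ (mulOp (θ * η) hθη (conjL2 k₂)) := by
  refine Lp.ext ?_
  filter_upwards [coeFn_mulOp_conjL2 _ hθφψη (mulOp φ hφ k₁ + mulOp ψ hψ k₂),
    Lp.coeFn_add (mulOp φ hφ k₁) (mulOp ψ hψ k₂), coeFn_mulOp φ hφ k₁, coeFn_mulOp ψ hψ k₂,
    Lp.coeFn_add (mulOp ψ hψ (mulOp (θ * η) hθη (conjL2 k₁)))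
      (mulOp φ hφ (mulOp (θ * η) hθη (conjL2 k₂))),
    coeFn_mulOp ψ hψ (mulOp (θ * η) hθη (conjL2 k₁)),
    coeFn_mulOp φ hφ (mulOp (θ * η) hθη (conjL2 k₂)),
    coeFn_mulOp_conjL2 (θ * η) hθη k₁, coeFn_mulOp_conjL2 (θ * η) hθη k₂,
    AEEqFun.coeFn_mul (θ * φ * ψ) η, AEEqFun.coeFn_mul (θ * φ) ψ, AEEqFun.coeFn_mul θ φ,
    AEEqFun.coeFn_mul θ η, hφ, hψ] with x h₁ h₂ h₃ h₄ h₅ h₆ h₇ h₈ h₉ h₁₀ h₁₁ h₁₂ h₁₃ hφx hψx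
  simp only [h₁, h₂, h₃, h₄, h₅, h₆, h₇, h₈, h₉, h₁₀, h₁₁, h₁₂, h₁₃, Pi.add_apply, Pi.mul_apply,
    map_add, map_mul]
  linear_combination (θ x * ψ x * η x * conj (k₁ x)) * mul_conj_of_norm_eq_one hφx
    + (θ x * φ x * η x * conj (k₂ x)) * mul_conj_of_norm_eq_one hψx

lemma fourierLp_mem_H2 {n : ℤ} (hn : 0 ≤ n) : (fourierLp 2 n : L2) ∈ H2 := by
  lift n to ℕ using hn
  exact Submodule.le_topologicalClosure _ (Submodule.subset_span ⟨n, rfl⟩)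

lemma map_eq_zero_of_mem_H2 (L : L2 →L[ℂ] ℂ) (hL : ∀ n : ℕ, L (fourierLp 2 (n : ℤ)) = 0)
    {g : L2} (hg : g ∈ H2) : L g = 0 := by
  have hker : H2 ≤ LinearMap.ker (L : L2 →ₗ[ℂ] ℂ) :=
    Submodule.topologicalClosure_minimal _
      (Submodule.span_le.2 <| by rintro _ ⟨n, rfl⟩; exact hL n) L.isClosed_ker
  exact hker hg

lemma mem_H2_iff {g : L2} : g ∈ H2 ↔ ∀ n : ℤ, n < 0 → ⟪(fourierLp 2 n : L2), g⟫_ℂ = 0 := by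
  refine ⟨fun hg n hn => map_eq_zero_of_mem_H2 (innerSL ℂ (fourierLp 2 n : L2)) (fun m => ?_) hg,
    fun h => ?_⟩
  · rw [innerSL_apply_apply, ← coe_fourierBasis]
    exact fourierBasis.orthonormal.2 (by omega)
  · rw [← SetLike.mem_coe, H2, Submodule.topologicalClosure_coe]
    refine mem_closure_of_tendsto (fourierBasis.hasSum_repr g)
      (Filter.Eventually.of_forall fun s => Submodule.sum_mem _ fun i _ => ?_)
    rcases lt_or_ge i 0 with hi | hi
    · rw [fourierBasis.repr_apply_apply, coe_fourierBasis, h i hi, zero_smul]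
      exact Submodule.zero_mem _
    · lift i to ℕ using hi
      exact Submodule.smul_mem _ _ (Submodule.subset_span ⟨i, (congrFun coe_fourierBasis _).symm⟩)

section ModelConj

variable (θ : UnitAddCircle →ₘ[μ] ℂ) (hθ : ∀ᵐ x ∂μ, ‖θ x‖ = 1) (hθz : ∀ᵐ x ∂μ, ‖(θ * zbar) x‖ = 1)

lemma coeFn_mul_zbar : ⇑(θ * zbar) =ᵐ[μ] fun x => θ x * fourier (-1) x := by
  filter_upwards [AEEqFun.coeFn_mul θ zbar, AEEqFun.coeFn_mk (μ := μ) _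
    (fourier (T := 1) (-1)).continuous.aestronglyMeasurable] with x h₁ h₂
  rw [h₁, Pi.mul_apply, zbar, h₂]

lemma mulOp_conjL2_fourierLp (n : ℤ) :
    mulOp (θ * zbar) hθz (conjL2 (fourierLp 2 n)) = mulOp θ hθ (fourierLp 2 (-n - 1)) := by
  refine Lp.ext ?_
  filter_upwards [coeFn_mulOp_conjL2 _ hθz (fourierLp 2 n), coeFn_mul_zbar θ,
    coeFn_mulOp θ hθ (fourierLp 2 (-n - 1)), coeFn_fourierLp 2 n,
    coeFn_fourierLp 2 (-n - 1)] with x h₁ h₂ h₃ h₄ h₅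
  rw [h₁, h₂, h₃, h₄, h₅, ← fourier_neg, sub_eq_add_neg, fourier_add]
  ring

lemma mulOp_conjL2_mulOp_fourierLp (n : ℤ) :
    mulOp (θ * zbar) hθz (conjL2 (mulOp θ hθ (fourierLp 2 n))) = fourierLp 2 (-n - 1) := by
  refine Lp.ext ?_
  filter_upwards [coeFn_mulOp_conjL2 _ hθz (mulOp θ hθ (fourierLp 2 n)), coeFn_mul_zbar θ,
    coeFn_mulOp θ hθ (fourierLp 2 n), coeFn_fourierLp 2 n,
    coeFn_fourierLp 2 (-n - 1), hθ] with x h₁ h₂ h₃ h₄ h₅ hθx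
  rw [h₁, h₂, h₃, h₄, h₅, map_mul, ← fourier_neg, sub_eq_add_neg, fourier_add]
  linear_combination (fourier (-n) x * fourier (-1) x) * mul_conj_of_norm_eq_one hθx

lemma mulOp_conjL2_mem_modelSpace {k : L2} (hk : k ∈ modelSpace θ hθ) :
    mulOp (θ * zbar) hθz (conjL2 k) ∈ modelSpace θ hθ := by
  obtain ⟨hkH2, hkθH2⟩ := Submodule.mem_inf.1 hk
  refine Submodule.mem_inf.2 ⟨mem_H2_iff.2 fun n hn => ?_, ?_⟩
  · have hθe : mulOp θ hθ (fourierLp 2 (-n - 1)) ∈ H2.map (mulOp θ hθ) :=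
      ⟨_, fourierLp_mem_H2 (by omega), rfl⟩
    rw [← inner_conj_symm, inner_mulOp_conjL2_comm, mulOp_conjL2_fourierLp θ hθ hθz,
      (Submodule.mem_orthogonal _ k).1 hkθH2 _ hθe, map_zero]
  · rw [Submodule.mem_orthogonal]
    rintro _ ⟨h, hh, rfl⟩
    have hCk : ⟪mulOp (θ * zbar) hθz (conjL2 k), mulCLM θ hθ h⟫_ℂ = 0 := by
      refine map_eq_zero_of_mem_H2 ((innerSL ℂ _).comp (mulCLM θ hθ)) (fun m => ?_) hh
      change ⟪_, mulOp θ hθ _⟫_ℂ = 0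
      rw [inner_mulOp_conjL2_comm, mulOp_conjL2_mulOp_fourierLp θ hθ hθz]
      exact mem_H2_iff.1 hkH2 _ (by omega)
    rw [← inner_conj_symm]
    change conj ⟪_, mulCLM θ hθ h⟫_ℂ = 0
    rw [hCk, map_zero]

end ModelConj

theorem statement3_general (θ φ ψ : UnitAddCircle →ₘ[μ] ℂ)
    (hθu : ∀ᵐ x ∂μ, ‖θ x‖ = 1)
    (hφ : ∀ᵐ x ∂μ, ‖φ x‖ = 1) (hψ : ∀ᵐ x ∂μ, ‖ψ x‖ = 1)
    (hprod : ∀ᵐ x ∂μ, ‖(θ * φ * ψ * zbar) x‖ = 1)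
    (hθz : ∀ᵐ x ∂μ, ‖(θ * zbar) x‖ = 1)
    (f : L2) (k₁ k₂ : L2)
    (hk₁ : k₁ ∈ modelSpace θ hθu) (hk₂ : k₂ ∈ modelSpace θ hθu)
    (hf : f = mulOp φ hφ k₁ + mulOp ψ hψ k₂) :
    mulOp (θ * φ * ψ * zbar) hprod (conjL2 f)
      = mulOp ψ hψ (mulOp (θ * zbar) hθz (conjL2 k₁))
        + mulOp φ hφ (mulOp (θ * zbar) hθz (conjL2 k₂)) ∧
    (∃ m₁ ∈ modelSpace θ hθu, ∃ m₂ ∈ modelSpace θ hθu,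
        mulOp (θ * φ * ψ * zbar) hprod (conjL2 f) = mulOp φ hφ m₁ + mulOp ψ hψ m₂) := by
  subst hf
  have hC := mulOp_conjL2_add θ φ ψ zbar hφ hψ hprod hθz k₁ k₂
  refine ⟨hC, _, mulOp_conjL2_mem_modelSpace θ hθu hθz hk₂,
    _, mulOp_conjL2_mem_modelSpace θ hθu hθz hk₁, ?_⟩
  rw [hC, add_comm]

/-- If f ∈ M = φK_θ ⊕ ψK_θ is written f = φk₁ + ψk₂ with k₁, k₂ ∈ K_θ, then
C_M f = ψ C_θ k₁ + φ C_θ k₂, where C_M f = θφψz̄f̄ and C_θ k = θz̄k̄.  In particular C_M f ∈ M. -/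
theorem statement3 (θ φ ψ : UnitAddCircle →ₘ[μ] ℂ)
    (hθu : ∀ᵐ x ∂μ, ‖θ x‖ = 1)
    (hθinner : ∀ f ∈ H2, mulOp θ hθu f ∈ H2)
    (hφ : ∀ᵐ x ∂μ, ‖φ x‖ = 1) (hψ : ∀ᵐ x ∂μ, ‖ψ x‖ = 1)
    (horth : ((modelSpace θ hθu).map (mulOp φ hφ)) ⟂ ((modelSpace θ hθu).map (mulOp ψ hψ)))
    (hprod : ∀ᵐ x ∂μ, ‖(θ * φ * ψ * zbar) x‖ = 1)
    (hθz : ∀ᵐ x ∂μ, ‖(θ * zbar) x‖ = 1)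
    (f : L2) (k₁ k₂ : L2)
    (hk₁ : k₁ ∈ modelSpace θ hθu) (hk₂ : k₂ ∈ modelSpace θ hθu)
    (hf : f = mulOp φ hφ k₁ + mulOp ψ hψ k₂) :
    mulOp (θ * φ * ψ * zbar) hprod (conjL2 f)
      = mulOp ψ hψ (mulOp (θ * zbar) hθz (conjL2 k₁))
        + mulOp φ hφ (mulOp (θ * zbar) hθz (conjL2 k₂)) ∧
    (∃ m₁ ∈ modelSpace θ hθu, ∃ m₂ ∈ modelSpace θ hθu,
        mulOp (θ * φ * ψ * zbar) hprod (conjL2 f) = mulOp φ hφ m₁ + mulOp ψ hψ m₂) :=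
  statement3_general θ φ ψ hθu hφ hψ hprod hθz f k₁ k₂ hk₁ hk₂ hf

end DualBand
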